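/- Let p_n/q_n = [f₀,…,f_n]_{ev} with p_n, q_n ∈ Ā comaximal, where (f_i) is the continued fraction of z ∈ Ĥ. Then deg(q_n) = Σ_{i=1}^{n} deg(f_i), and ν(z - p_n/q_n) = deg(f_{n+1}) + 2 deg(q_n) whenever f_{n+1} is defined. -/

import Mathlib

universe u

/-- Evaluation of a finite continued fraction `[f₀, f₁, …, f_N]` in a field,
`cfEval [a] = a`, `cfEval (a :: l) = a + (cfEval l)⁻¹` (with the convention `0⁻¹ = 0`). -/
def cfEval {L : Type u} [Field L] : List L → L
  | [] => 0
  | a :: l => a + (cfEval l)⁻¹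

/-- The Moebius maps `ρ_n = σ_n ∘ ⋯ ∘ σ_0`, where `σ_i x = (x - f_i)⁻¹`. -/
def rho {L : Type u} [Field L] (f : ℕ → L) : ℕ → L → L
  | 0, x => (x - f 0)⁻¹
  | n + 1, x => (rho f n x - f (n + 1))⁻¹

/-- The derivative `ρ_n'` of `ρ_n`, computed by the chain rule from
`σ_i'(x) = -((x - f_i)⁻¹)²`. -/
def rho' {L : Type u} [Field L] (f : ℕ → L) : ℕ → L → L
  | 0, x => -((x - f 0)⁻¹) ^ 2
  | n + 1, x => -((rho f n x - f (n + 1))⁻¹) ^ 2 * rho' f n x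

/-- An abstract presentation of the completion `K̂` of the Puiseux field
`E⟨⟨t⁻¹⟩⟩` over a field `E`.  The field `K` carries an additive valuation
`ν` with values in `ℚ` on nonzero elements (normalized by `ν (t^r) = -r`,
where `mono r` plays the role of the monomial `t^r`), the subfield `E` is
embedded via `emb`, the simple "Laurent Puiseux polynomials" (the ring
generated by `E` and all rational powers of `t`) are dense, and `K` is
complete for `ν`. -/
structure PuiseuxCompletion (E : Type u) [Field E] where
  K : Type u
  [fieldK : Field K]
  ν : K → ℚ
  emb : E →+* K
  mono : ℚ → K
  mono_zero : mono 0 = 1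
  mono_mul : ∀ r s : ℚ, mono r * mono s = mono (r + s)
  ν_mono : ∀ r : ℚ, ν (mono r) = -r
  ν_emb : ∀ e : E, e ≠ 0 → ν (emb e) = 0
  ν_mul : ∀ x y : K, x ≠ 0 → y ≠ 0 → ν (x * y) = ν x + ν y
  ν_add : ∀ x y : K, x ≠ 0 → y ≠ 0 → x + y ≠ 0 → min (ν x) (ν y) ≤ ν (x + y)
  dense' : ∀ z : K, ∀ C : ℚ,
    ∃ f ∈ Subring.closure (Set.range emb ∪ Set.range mono), z = f ∨ C < ν (z - f)
  complete' : ∀ uSeq : ℕ → K,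
    (∀ C : ℚ, ∃ N : ℕ, ∀ m ≥ N, ∀ n ≥ N, uSeq m = uSeq n ∨ C < ν (uSeq m - uSeq n)) →
    ∃ z : K, ∀ C : ℚ, ∃ N : ℕ, ∀ n ≥ N, uSeq n = z ∨ C < ν (uSeq n - z)

attribute [instance] PuiseuxCompletion.fieldK

namespace PuiseuxCompletion

variable {E : Type u} [Field E] (P : PuiseuxCompletion E)

/-- The ring `Ā = E⟨t⟩` of Puiseux polynomials: finite `E`-linear combinations of
nonnegative rational powers of `t`. -/
def Abar : Subring P.K :=
  Subring.closure (Set.range P.emb ∪ P.mono '' {r : ℚ | 0 ≤ r})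

/-- `deg f = -ν f`. -/
def deg (f : P.K) : ℚ := -P.ν f

/-- The rational Puiseux field `k̃ = Quot(Ā) = ⋃ₙ E(t^{1/n})`, as a subfield of `K̂`. -/
def ktilde : Subfield P.K := Subfield.closure (P.Abar : Set P.K)

/-- `uSeq n → z` with respect to the valuation `ν`. -/
def TendsTo (uSeq : ℕ → P.K) (z : P.K) : Prop :=
  ∀ C : ℚ, ∃ N : ℕ, ∀ n ≥ N, uSeq n = z ∨ C < P.ν (uSeq n - z)

/-- One step of the continued fraction algorithm succeeds at index `i`:
`f i` is the Puiseux polynomial with `ν (z_i - f i) > 0`, the fraction does not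
end at `i` (`z_i ≠ f i`), and `z_{i+1} = (z_i - f i)⁻¹`. -/
def CFStep (f zs : ℕ → P.K) (i : ℕ) : Prop :=
  f i ∈ P.Abar ∧ 0 < P.ν (zs i - f i) ∧ zs i ≠ f i ∧ zs (i + 1) = (zs i - f i)⁻¹

/-- The `n`-th approximant `x_n = [f₀, …, f_n]_{ev}`. -/
def approx (f : ℕ → P.K) (n : ℕ) : P.K :=
  cfEval (List.ofFn fun i : Fin (n + 1) => f i)

/-- The continued fraction of `z` begins with the coefficients `f 0, …, f n`. -/
def CFBegins (f : ℕ → P.K) (n : ℕ) (z : P.K) : Prop :=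
  ∃ zs : ℕ → P.K, zs 0 = z ∧ (∀ i < n, P.CFStep f zs i) ∧
    f n ∈ P.Abar ∧ (zs n = f n ∨ 0 < P.ν (zs n - f n))

/-- `z` is the value of the continued fraction expression with coefficients `f`
and length `L` (finite or infinite); the coefficients are Puiseux polynomials of
positive degree after the zeroth one. -/
def CFExprEval (f : ℕ → P.K) (L : WithTop ℕ) (z : P.K) : Prop :=
  f 0 ∈ P.Abar ∧
  (∀ i : ℕ, 1 ≤ i → (i : WithTop ℕ) ≤ L → f i ∈ P.Abar ∧ 0 < P.deg (f i)) ∧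
  ((∃ N : ℕ, L = (N : WithTop ℕ) ∧ z = P.approx f N) ∨
    (L = ⊤ ∧ P.TendsTo (fun n => P.approx f n) z))

/-- The equivalence relation `(a, r) ~ (a', r')` iff `r = r'` and `ν (a - a') ≥ r`
(the pairs define the same Berkovich point `η_{a,r}` of type II or III). -/
def ballEquiv (p q : P.K × ℝ) : Prop :=
  p.2 = q.2 ∧ (p.1 = q.1 ∨ p.2 ≤ (P.ν (p.1 - q.1) : ℝ))

open scoped Classical in
/-- The Berkovich hyperbolic distance, computed on representatives. -/
noncomputable def berkDist (p q : P.K × ℝ) : ℝ :=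
  if p.1 = q.1 ∨ min p.2 q.2 ≤ (P.ν (p.1 - q.1) : ℝ) then |p.2 - q.2|
  else p.2 + q.2 - 2 * (P.ν (p.1 - q.1) : ℝ)

/-- The closed ball `B_a^{[r]} = {b : ν (b - a) ≥ r}` corresponding to `η_{a,r}`. -/
def closedBall (a : P.K) (r : ℝ) : Set P.K :=
  {b : P.K | b = a ∨ r ≤ (P.ν (b - a) : ℝ)}

/-- The Moebius transformation associated to a `2 × 2` matrix. -/
def mob (g : Matrix (Fin 2) (Fin 2) P.K) (x : P.K) : P.K :=
  (g 0 0 * x + g 0 1) / (g 1 0 * x + g 1 1)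

/-- The ring `A_M = E[t^{1/M}]`. -/
def AM (M : ℕ) : Subring P.K :=
  Subring.closure (Set.range P.emb ∪ {P.mono (1 / (M : ℚ))})

/-- The field `E(t^{1/M})`, whose `ν`-completion inside `K̂` is `K_M = E((t^{-1/M}))`. -/
def kM (M : ℕ) : Subfield P.K :=
  Subfield.closure (Set.range P.emb ∪ {P.mono (1 / (M : ℚ))})

end PuiseuxCompletion

/-!
Let `p_k / q_k` be the convergents of `[f 0, f 1, …]`, computed by the continuant recursion.
Since `p_{n-1} q_n - p_n q_{n-1} = ±1`, the pair `(p_n, q_n)` is comaximal, so another comaximal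
representation `p / q` of the same fraction has `q_n = c q` with `c` a unit of `Ā`; nonzero Puiseux
polynomials have `ν ≤ 0`, hence units have `ν = 0` and `deg q = deg q_n`. The partial quotients
`f_i`, `i ≥ 1`, have the (positive) degree of the complete quotients `z_i`, so in
`q_{k+1} = f_k q_k + q_{k-1}` the first term dominates and `deg q_n = Σ deg f_i`. Finally, with
`w = z_{n+1}`, `z - p_n / q_n = ±1 / (q_n (w q_n + q_{n-1}))`, where again `w q_n` dominates and
`ν w = ν f_{n+1}`.
-/

section Continuants

variable {R : Type u} [CommRing R]

/-- `cfNum f (k + 1) / cfDen f (k + 1)` is the `k`-th convergent `p_k / q_k` of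
`[f 0, f 1, …]`; index `0` holds `p_{-1} = 1`, `q_{-1} = 0`. -/
def cfNum (f : ℕ → R) : ℕ → R
  | 0 => 1
  | 1 => f 0
  | k + 2 => f (k + 1) * cfNum f (k + 1) + cfNum f k

def cfDen (f : ℕ → R) : ℕ → R
  | 0 => 0
  | 1 => 1
  | k + 2 => f (k + 1) * cfDen f (k + 1) + cfDen f k

theorem cfNum_add_two (f : ℕ → R) (k : ℕ) :
    cfNum f (k + 2) = f (k + 1) * cfNum f (k + 1) + cfNum f k := rfl

theorem cfDen_add_two (f : ℕ → R) (k : ℕ) :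
    cfDen f (k + 2) = f (k + 1) * cfDen f (k + 1) + cfDen f k := rfl

theorem cfNum_mul_cfDen_sub (f : ℕ → R) :
    ∀ k, cfNum f k * cfDen f (k + 1) - cfNum f (k + 1) * cfDen f k = (-1) ^ k
  | 0 => by simp [cfNum, cfDen]
  | k + 1 => by
    rw [cfNum_add_two, cfDen_add_two]
    linear_combination (-1 : R) * cfNum_mul_cfDen_sub f k

/-- Continuants of the tail `[f 1, f 2, …]`: the recursion read from the other end. -/
theorem cfDen_succ_and_cfNum_succ (f : ℕ → R) :
    ∀ k, cfDen f (k + 1) = cfNum (fun i => f (i + 1)) k ∧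
      cfNum f (k + 1) = f 0 * cfNum (fun i => f (i + 1)) k + cfDen (fun i => f (i + 1)) k
  | 0 => by simp [cfNum, cfDen]
  | 1 => by simp [cfNum, cfDen]; ring
  | k + 2 => by
    obtain ⟨hden₁, hnum₁⟩ := cfDen_succ_and_cfNum_succ f (k + 1)
    obtain ⟨hden₀, hnum₀⟩ := cfDen_succ_and_cfNum_succ f k
    refine ⟨?_, ?_⟩
    · rw [cfDen_add_two, cfNum_add_two, hden₁, hden₀]
    · rw [cfNum_add_two f (k + 1), cfNum_add_two (fun i => f (i + 1)) k,
        cfDen_add_two (fun i => f (i + 1)) k]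
      linear_combination f (k + 2) * hnum₁ + hnum₀

theorem mul_cfDen_complete_eq (f zs : ℕ → R) (k : ℕ)
    (hzs : ∀ i ≤ k, (zs i - f i) * zs (i + 1) = 1) :
    zs 0 * (zs (k + 1) * cfDen f (k + 1) + cfDen f k) =
      zs (k + 1) * cfNum f (k + 1) + cfNum f k := by
  induction k with
  | zero => simp only [cfNum, cfDen]; linear_combination hzs 0 le_rfl
  | succ k ih =>
    rw [cfDen_add_two, cfNum_add_two]
    linear_combination zs (k + 2) * ih (fun i hi => hzs i (by omega)) +
      (cfNum f (k + 1) - zs 0 * cfDen f (k + 1)) * hzs (k + 1) le_rfl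

theorem cfNum_mem_and_cfDen_mem (A : Subring R) (f : ℕ → R) :
    ∀ k, (∀ i < k, f i ∈ A) → cfNum f k ∈ A ∧ cfDen f k ∈ A
  | 0, _ => ⟨one_mem A, zero_mem A⟩
  | 1, hf => ⟨hf 0 one_pos, one_mem A⟩
  | k + 2, hf => by
    obtain ⟨hnum₁, hden₁⟩ := cfNum_mem_and_cfDen_mem A f (k + 1) fun i hi => hf i (by omega)
    obtain ⟨hnum₀, hden₀⟩ := cfNum_mem_and_cfDen_mem A f k fun i hi => hf i (by omega)
    have hfk := hf (k + 1) (by omega)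
    exact ⟨add_mem (mul_mem hfk hnum₁) hnum₀, add_mem (mul_mem hfk hden₁) hden₀⟩

theorem cfNum_cfDen_comaximal (A : Subring R) (f : ℕ → R) (k : ℕ) (hf : ∀ i < k, f i ∈ A) :
    ∃ u v, u ∈ A ∧ v ∈ A ∧ u * cfNum f (k + 1) + v * cfDen f (k + 1) = 1 := by
  obtain ⟨hnum, hden⟩ := cfNum_mem_and_cfDen_mem A f k hf
  have hsign : (-1 : R) ^ k ∈ A := pow_mem (neg_mem (one_mem A)) k
  have hsq : (-1 : R) ^ k * (-1) ^ k = 1 := by rw [← mul_pow]; simp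
  exact ⟨-(-1) ^ k * cfDen f k, (-1) ^ k * cfNum f k, mul_mem (neg_mem hsign) hden,
    mul_mem hsign hnum, by linear_combination (-1 : R) ^ k * cfNum_mul_cfDen_sub f k + hsq⟩

theorem Subring.exists_mem_eq_mul_of_comaximal (A : Subring R) {p q p' q' : R}
    (hp' : p' ∈ A) (hq' : q' ∈ A) (hpq : ∃ u v, u ∈ A ∧ v ∈ A ∧ u * p + v * q = 1)
    (h : p * q' = p' * q) : ∃ c ∈ A, q' = c * q := by
  obtain ⟨u, v, hu, hv, huv⟩ := hpq
  exact ⟨u * p' + v * q', add_mem (mul_mem hu hp') (mul_mem hv hq'),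
    by linear_combination (-q') * huv + u * h⟩

end Continuants

theorem sub_cfNum_div_cfDen {K : Type u} [Field K] (f zs : ℕ → K) (n : ℕ)
    (hzs : ∀ i ≤ n, (zs i - f i) * zs (i + 1) = 1) (hQ : cfDen f (n + 1) ≠ 0)
    (hD : zs (n + 1) * cfDen f (n + 1) + cfDen f n ≠ 0) :
    zs 0 - cfNum f (n + 1) / cfDen f (n + 1) =
      (-1) ^ n / (cfDen f (n + 1) * (zs (n + 1) * cfDen f (n + 1) + cfDen f n)) := by
  rw [eq_div_iff (mul_ne_zero hQ hD)]
  field_simp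
  linear_combination cfDen f (n + 1) * mul_cfDen_complete_eq f zs n hzs + cfNum_mul_cfDen_sub f n

namespace PuiseuxCompletion

variable {E : Type u} [Field E] (P : PuiseuxCompletion E)

theorem nu_one : P.ν 1 = 0 := by
  have h := P.ν_mul 1 1 one_ne_zero one_ne_zero
  rw [mul_one] at h
  linarith

theorem nu_neg_one : P.ν (-1) = 0 := by
  have h := P.ν_mul (-1) (-1) (by simp) (by simp)
  rw [neg_mul_neg, mul_one, P.nu_one] at h
  linarith

theorem nu_neg_one_pow (n : ℕ) : P.ν ((-1) ^ n) = 0 := by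
  rcases neg_one_pow_eq_or P.K n with h | h <;> rw [h]
  exacts [P.nu_one, P.nu_neg_one]

theorem nu_neg {x : P.K} (hx : x ≠ 0) : P.ν (-x) = P.ν x := by
  have h := P.ν_mul (-1) x (by simp) hx
  rw [neg_one_mul, P.nu_neg_one, zero_add] at h
  exact h

theorem nu_inv {x : P.K} (hx : x ≠ 0) : P.ν x⁻¹ = -P.ν x := by
  have h := P.ν_mul x x⁻¹ hx (inv_ne_zero hx)
  rw [mul_inv_cancel₀ hx, P.nu_one] at h
  linarith

theorem mono_ne_zero (r : ℚ) : P.mono r ≠ 0 := by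
  intro h
  have h1 : P.mono r * P.mono (-r) = 1 := by rw [P.mono_mul, add_neg_cancel, P.mono_zero]
  rw [h, zero_mul] at h1
  exact zero_ne_one h1

theorem add_ne_zero_and_nu_add_eq {x y : P.K} (hx : x ≠ 0) (hlt : y ≠ 0 → P.ν x < P.ν y) :
    x + y ≠ 0 ∧ P.ν (x + y) = P.ν x := by
  by_cases hy : y = 0
  · simp [hy, hx]
  have hlt := hlt hy
  have hxy : x + y ≠ 0 := by
    intro h
    rw [eq_neg_of_add_eq_zero_right h, P.nu_neg hx] at hlt
    exact lt_irrefl _ hlt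
  refine ⟨hxy, le_antisymm ?_ ?_⟩
  · have h := P.ν_add (x + y) (-y) hxy (neg_ne_zero.2 hy) (by simpa using hx)
    rw [add_neg_cancel_right, P.nu_neg hy] at h
    exact (min_le_iff.mp h).resolve_right (not_le.mpr hlt)
  · exact (min_eq_left hlt.le).symm.trans_le (P.ν_add x y hx hy hxy)

theorem mul_add_ne_zero_and_nu_eq {x a b : P.K} (hx : x ≠ 0) (hνx : P.ν x < 0) (ha : a ≠ 0)
    (hab : b ≠ 0 → P.ν a ≤ P.ν b) :
    x * a + b ≠ 0 ∧ P.ν (x * a + b) = P.ν x + P.ν a := by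
  rw [← P.ν_mul x a hx ha]
  refine P.add_ne_zero_and_nu_add_eq (mul_ne_zero hx ha) fun hb => ?_
  rw [P.ν_mul x a hx ha]
  linarith [hab hb]

theorem ne_zero_and_nu_eq_of_nu_sub_pos {x g : P.K} (hx : x ≠ 0) (hνx : P.ν x < 0)
    (h : x = g ∨ 0 < P.ν (x - g)) : g ≠ 0 ∧ P.ν g = P.ν x := by
  rcases eq_or_ne x g with rfl | hxg
  · exact ⟨hx, rfl⟩
  have hsub : x - g ≠ 0 := sub_ne_zero.mpr hxg
  have key := P.add_ne_zero_and_nu_add_eq hx (y := -(x - g)) fun _ => by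
    rw [P.nu_neg hsub]
    linarith [h.resolve_left hxg]
  rwa [show x + -(x - g) = g by ring] at key

theorem ne_zero_and_nu_eq_of_pairwise_nu_ne {ι : Type*} {s : Finset ι} (hs : s.Nonempty)
    (g : ι → P.K) (hg : ∀ i ∈ s, g i ≠ 0)
    (hν : ∀ i ∈ s, ∀ j ∈ s, i ≠ j → P.ν (g i) ≠ P.ν (g j)) :
    ∑ i ∈ s, g i ≠ 0 ∧ ∃ i ∈ s, P.ν (∑ j ∈ s, g j) = P.ν (g i) := by
  induction hs using Finset.Nonempty.cons_induction with
  | singleton a => simpa using hg a (by simp)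
  | cons a s ha hs ih =>
    obtain ⟨hsum, i, hi, hνi⟩ := ih (fun i hi => hg i (by simp [hi]))
      (fun i hi j hj => hν i (by simp [hi]) j (by simp [hj]))
    have hga : g a ≠ 0 := hg a (by simp)
    have hne : P.ν (g a) ≠ P.ν (∑ j ∈ s, g j) := by
      rw [hνi]
      exact hν a (by simp) i (by simp [hi]) (fun h => ha (h ▸ hi))
    rw [Finset.sum_cons]
    rcases hne.lt_or_gt with hlt | hgt
    · exact (P.add_ne_zero_and_nu_add_eq hga fun _ => hlt).imp_right fun h => ⟨a, by simp, h⟩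
    · rw [add_comm]
      exact (P.add_ne_zero_and_nu_add_eq hsum fun _ => hgt).imp_right
        fun h => ⟨i, by simp [hi], h.trans hνi⟩

def monoHom : Multiplicative ℚ≥0 →* P.K where
  toFun r := P.mono (r.toAdd : ℚ)
  map_one' := P.mono_zero
  map_mul' x y := by simp [P.mono_mul]

/-- Evaluation of a Puiseux polynomial, written as a finitely supported function
`ℚ≥0 →₀ E` of its coefficients. -/
noncomputable def polyHom : AddMonoidAlgebra E ℚ≥0 →+* P.K :=
  AddMonoidAlgebra.liftNCRingHom P.emb P.monoHom fun _ _ => Commute.all _ _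

theorem polyHom_single (r : ℚ≥0) (c : E) :
    P.polyHom (AddMonoidAlgebra.single r c) = P.emb c * P.mono r := by
  simp only [polyHom, AddMonoidAlgebra.liftNCRingHom_single]
  rfl

theorem Abar_le_range_polyHom : P.Abar ≤ P.polyHom.range := by
  rw [Abar, Subring.closure_le]
  rintro x (⟨c, rfl⟩ | ⟨r, hr, rfl⟩)
  · exact ⟨AddMonoidAlgebra.single 0 c, by simp [polyHom_single, P.mono_zero]⟩
  · exact ⟨AddMonoidAlgebra.single r.toNNRat 1, by
      rw [polyHom_single, map_one, one_mul, Rat.coe_toNNRat r hr]⟩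

/-- The monomials of a Puiseux polynomial have pairwise distinct valuations, so the
valuation of a nonzero one is that of one of its monomials. -/
theorem nu_nonpos_of_mem_Abar {x : P.K} (hx : x ∈ P.Abar) (hx0 : x ≠ 0) : P.ν x ≤ 0 := by
  classical
  obtain ⟨d, rfl⟩ := P.Abar_le_range_polyHom hx
  have hsum : P.polyHom d = ∑ r ∈ d.coeff.support, P.emb (d.coeff r) * P.mono r := by
    conv_lhs => rw [← AddMonoidAlgebra.sum_coeff_single d]
    simp [Finsupp.sum, polyHom_single]
  have hterm : ∀ r ∈ d.coeff.support, P.emb (d.coeff r) ≠ 0 := fun r hr =>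
    (map_ne_zero P.emb).mpr (Finsupp.mem_support_iff.mp hr)
  have hνterm : ∀ r ∈ d.coeff.support, P.ν (P.emb (d.coeff r) * P.mono r) = -r := fun r hr => by
    rw [P.ν_mul _ _ (hterm r hr) (P.mono_ne_zero r),
      P.ν_emb _ (Finsupp.mem_support_iff.mp hr), P.ν_mono, zero_add]
  have hne : d.coeff.support.Nonempty := by
    by_contra h
    rw [Finset.not_nonempty_iff_eq_empty] at h
    exact hx0 (by rw [hsum, h, Finset.sum_empty])
  obtain ⟨-, r, hr, hνr⟩ := P.ne_zero_and_nu_eq_of_pairwise_nu_ne hne _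
    (fun r hr => mul_ne_zero (hterm r hr) (P.mono_ne_zero r))
    (fun i hi j hj hij => by rw [hνterm i hi, hνterm j hj]; simpa using hij)
  rw [hsum, hνr, hνterm r hr]
  simp

theorem nu_eq_zero_of_mul_eq_one {a b : P.K} (ha : a ∈ P.Abar) (hb : b ∈ P.Abar)
    (hab : a * b = 1) : P.ν a = 0 := by
  have hsum := P.ν_mul a b (left_ne_zero_of_mul_eq_one hab) (right_ne_zero_of_mul_eq_one hab)
  rw [hab, P.nu_one] at hsum
  linarith [P.nu_nonpos_of_mem_Abar ha (left_ne_zero_of_mul_eq_one hab),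
    P.nu_nonpos_of_mem_Abar hb (right_ne_zero_of_mul_eq_one hab)]

theorem nu_eq_of_comaximal {p q p' q' : P.K} (hp : p ∈ P.Abar) (hq : q ∈ P.Abar)
    (hp' : p' ∈ P.Abar) (hq' : q' ∈ P.Abar) (hq0 : q ≠ 0)
    (hpq : ∃ u v, u ∈ P.Abar ∧ v ∈ P.Abar ∧ u * p + v * q = 1)
    (hpq' : ∃ u v, u ∈ P.Abar ∧ v ∈ P.Abar ∧ u * p' + v * q' = 1)
    (h : p * q' = p' * q) : P.ν q' = P.ν q := by
  obtain ⟨c, hc, rfl⟩ := P.Abar.exists_mem_eq_mul_of_comaximal hp' hq' hpq h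
  obtain ⟨d, hd, hqd⟩ := P.Abar.exists_mem_eq_mul_of_comaximal hp hq hpq' h.symm
  have hcd : c * d = 1 := mul_right_cancel₀ hq0 (by linear_combination -hqd)
  rw [P.ν_mul c q (left_ne_zero_of_mul_eq_one hcd) hq0,
    P.nu_eq_zero_of_mul_eq_one hc hd hcd, zero_add]

theorem cfDen_succ_ne_zero_and_nu_eq (f : ℕ → P.K) (m : ℕ)
    (hf : ∀ i, 1 ≤ i → i ≤ m → f i ≠ 0 ∧ P.ν (f i) < 0) :
    ∀ k ≤ m, cfDen f (k + 1) ≠ 0 ∧ P.ν (cfDen f (k + 1)) = ∑ i ∈ Finset.Icc 1 k, P.ν (f i) ∧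
      (cfDen f k ≠ 0 → P.ν (cfDen f (k + 1)) ≤ P.ν (cfDen f k)) := by
  intro k
  induction k with
  | zero => simp [cfDen, P.nu_one]
  | succ k ih =>
    intro hk
    obtain ⟨hQ, hνQ, hmono⟩ := ih (by omega)
    obtain ⟨hfk, hνfk⟩ := hf (k + 1) (by omega) hk
    obtain ⟨hQ', hνQ'⟩ := P.mul_add_ne_zero_and_nu_eq hfk hνfk hQ hmono
    rw [cfDen_add_two, Finset.sum_Icc_succ_top (by omega), hνQ', ← hνQ]
    exact ⟨hQ', by ring, fun _ => by linarith⟩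

theorem approx_succ (f : ℕ → P.K) (m : ℕ) :
    P.approx f (m + 1) = f 0 + (P.approx (fun i => f (i + 1)) m)⁻¹ := by
  simp [approx, List.ofFn_succ, cfEval]

theorem approx_eq_cfNum_div_cfDen (f : ℕ → P.K) (m : ℕ)
    (hf : ∀ i, 1 ≤ i → i ≤ m → f i ≠ 0 ∧ P.ν (f i) < 0) :
    P.approx f m = cfNum f (m + 1) / cfDen f (m + 1) := by
  induction m generalizing f with
  | zero => simp [approx, cfEval, cfNum, cfDen]
  | succ m ih =>
    rw [P.approx_succ, ih _ fun i h₁ h₂ => hf (i + 1) (by omega) (by omega)]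
    have hQ := (P.cfDen_succ_ne_zero_and_nu_eq f (m + 1) hf (m + 1) le_rfl).1
    obtain ⟨hden, hnum⟩ := cfDen_succ_and_cfNum_succ f (m + 1)
    rw [hden] at hQ
    rw [hden, hnum, inv_div]
    field_simp

variable {P}

theorem CFStep.sub_mul_eq_one {f zs : ℕ → P.K} {i : ℕ} (h : P.CFStep f zs i) :
    (zs i - f i) * zs (i + 1) = 1 := by
  rw [h.2.2.2]
  exact mul_inv_cancel₀ (sub_ne_zero.mpr h.2.2.1)

theorem CFStep.nu_succ {f zs : ℕ → P.K} {i : ℕ} (h : P.CFStep f zs i)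
    (hnext : zs (i + 1) = f (i + 1) ∨ 0 < P.ν (zs (i + 1) - f (i + 1))) :
    zs (i + 1) ≠ 0 ∧ P.ν (zs (i + 1)) < 0 ∧
      f (i + 1) ≠ 0 ∧ P.ν (f (i + 1)) = P.ν (zs (i + 1)) := by
  obtain ⟨-, hpos, hne, hzs⟩ := h
  have hsub : zs i - f i ≠ 0 := sub_ne_zero.mpr hne
  have hz : zs (i + 1) ≠ 0 := by rw [hzs]; exact inv_ne_zero hsub
  have hνz : P.ν (zs (i + 1)) < 0 := by rw [hzs, P.nu_inv hsub]; linarith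
  exact ⟨hz, hνz, P.ne_zero_and_nu_eq_of_nu_sub_pos hz hνz hnext⟩

end PuiseuxCompletion

open PuiseuxCompletion in
/-- if `p_n / q_n = [f₀, …, f_n]_{ev}` with `p_n, q_n ∈ Ā`
comaximal, then `deg q_n = Σ_{i=1}^n deg f_i`, and
`ν (z - p_n/q_n) = deg f_{n+1} + 2 deg q_n` whenever `f_{n+1}` is defined. -/
theorem statement19 {E : Type u} [Field E] (P : PuiseuxCompletion E)
    (z : P.K) (f zs : ℕ → P.K) (n : ℕ)
    (h0 : zs 0 = z) (hstep : ∀ i < n, P.CFStep f zs i)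
    (hfn : f n ∈ P.Abar) (hcn : zs n = f n ∨ 0 < P.ν (zs n - f n))
    (p q : P.K) (hp : p ∈ P.Abar) (hq : q ∈ P.Abar) (hq0 : q ≠ 0)
    (hcomax : ∃ u v : P.K, u ∈ P.Abar ∧ v ∈ P.Abar ∧ u * p + v * q = 1)
    (hpq : p / q = P.approx f n) :
    P.deg q = ∑ i ∈ Finset.Icc 1 n, P.deg (f i) ∧
      ((∀ i ≤ n, P.CFStep f zs i) → f (n + 1) ∈ P.Abar →
        (zs (n + 1) = f (n + 1) ∨ 0 < P.ν (zs (n + 1) - f (n + 1))) →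
        P.ν (z - p / q) = P.deg (f (n + 1)) + 2 * P.deg q) := by
  have hf : ∀ i, 1 ≤ i → i ≤ n → f i ≠ 0 ∧ P.ν (f i) < 0 := by
    rintro (_ | i) h₁ h₂
    · omega
    have hnext : zs (i + 1) = f (i + 1) ∨ 0 < P.ν (zs (i + 1) - f (i + 1)) :=
      h₂.lt_or_eq.elim (fun h => Or.inr (hstep (i + 1) h).2.1) fun h => h ▸ hcn
    obtain ⟨-, hνz, hfi, hνf⟩ := (hstep i (by omega)).nu_succ hnext
    exact ⟨hfi, hνf ▸ hνz⟩
  have hmem : ∀ i < n + 1, f i ∈ P.Abar := fun i hi =>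
    (Nat.lt_succ_iff.mp hi).lt_or_eq.elim (fun h => (hstep i h).1) fun h => h ▸ hfn
  obtain ⟨hQ, hνQ, hmono⟩ := P.cfDen_succ_ne_zero_and_nu_eq f n hf n le_rfl
  have hconv : p / q = cfNum f (n + 1) / cfDen f (n + 1) :=
    hpq.trans (P.approx_eq_cfNum_div_cfDen f n hf)
  obtain ⟨hnum_mem, hden_mem⟩ := cfNum_mem_and_cfDen_mem P.Abar f (n + 1) hmem
  have hνq : P.ν (cfDen f (n + 1)) = P.ν q :=
    P.nu_eq_of_comaximal hp hq hnum_mem hden_mem hq0 hcomax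
      (cfNum_cfDen_comaximal P.Abar f n fun i hi => hmem i (by omega))
      ((div_eq_div_iff hq0 hQ).mp hconv)
  refine ⟨by simp [deg, ← hνq, hνQ], fun hstep' _ hnext => ?_⟩
  obtain ⟨hw, hνw, -, hνf⟩ := (hstep' n le_rfl).nu_succ hnext
  obtain ⟨hD, hνD⟩ := P.mul_add_ne_zero_and_nu_eq hw hνw hQ hmono
  rw [← h0, hconv, sub_cfNum_div_cfDen f zs n (fun i hi => (hstep' i hi).sub_mul_eq_one) hQ hD,
    div_eq_mul_inv, P.ν_mul _ _ (pow_ne_zero n (by norm_num)) (inv_ne_zero (mul_ne_zero hQ hD)),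
    P.nu_inv (mul_ne_zero hQ hD), P.ν_mul _ _ hQ hD, hνD, P.nu_neg_one_pow, hνq, ← hνf]
  simp only [deg]
  ring
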